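/- Let m ∈ ℕ, R, N ∈ ℕ with N ≥ 2, let x_1, …, x_R ∈ ℝ^m, and let (a_n)_{n ∈ ℤ^m} be any m-fold sequence of complex numbers. Then Σ_{i=1}^R |Σ_{n ∈ ℤ^m, ‖n‖₂ ≤ N^{1/m}} a_n · e(n · x_i)|² ≪ F · N · Σ_{n ∈ ℤ^m, ‖n‖₂ ≤ N^{1/m}} |a_n|², where F = max_{1 ≤ i ≤ R} #{j ∈ {1,…,R} : min_{z ∈ ℤ^m} ‖x_j − x_i − z‖₂ ≤ √m / N^{1/m}}. -/

import Mathlib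

/-!
By duality it suffices to bound `∑_{‖n‖₂ ≤ N^{1/m}} |∑ᵢ bᵢ e(n · xᵢ)|²` by `≪ F N ∑ᵢ |bᵢ|²`.
Every coordinate of such an `n` satisfies `|n_v| ≤ L := ⌈N^{1/m}⌉`, where the Fejér weight of
order `M = 2L` is at least `1/2`; so the sum is at most `2^m` times the Fejér-weighted sum over
the box `|n_v| < M`, which expands into `∑_{i,j} bᵢ b̄ⱼ ∏_v K_M(x_{i,v} - x_{j,v})` with
`K_M(t) = |∑_{k<M} e(kt)|² / M ≤ min(M, 1 / (4M ‖t‖²))`. By Schur's test it remains to bound the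
row sums of this kernel: sorting the `xⱼ` into the `M^m` cells of side `1/M` relative to `xᵢ`,
each cell holds at most `F` points, and summing the kernel bound over the cells gives `(3M)^m`.
-/

namespace LargeSieve

open Finset Real

noncomputable def e (t : ℝ) : ℂ := Complex.exp (2 * π * Complex.I * t)

lemma e_add (s t : ℝ) : e (s + t) = e s * e t := by
  simp only [e, ← Complex.exp_add]; push_cast; ring_nf

lemma e_sum {ι : Type*} (s : Finset ι) (f : ι → ℝ) : e (∑ v ∈ s, f v) = ∏ v ∈ s, e (f v) := by
  simp only [e, ← Complex.exp_sum, ← mul_sum]; push_cast; rfl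

lemma e_natCast_mul (n : ℕ) (t : ℝ) : e (n * t) = e t ^ n := by
  rw [e, e, ← Complex.exp_nat_mul]; push_cast; ring_nf

lemma conj_e (t : ℝ) : starRingEnd ℂ (e t) = e (-t) := by
  rw [e, e, ← Complex.exp_conj]; congr 1; simp [map_ofNat]

lemma norm_e (t : ℝ) : ‖e t‖ = 1 := by
  rw [e, show 2 * (π : ℂ) * Complex.I * t = (2 * π * t : ℝ) * Complex.I by push_cast; ring]
  exact Complex.norm_exp_ofReal_mul_I _

lemma norm_e_sub_one (t : ℝ) : ‖e t - 1‖ = 2 * |sin (π * t)| := by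
  rw [e, show 2 * (π : ℂ) * Complex.I * t = Complex.I * (2 * π * t : ℝ) by push_cast; ring,
    Complex.norm_exp_I_mul_ofReal_sub_one, norm_mul, Real.norm_eq_abs, Real.norm_eq_abs]
  ring_nf

/-- Jordan's inequality, transported to the distance `|t - round t|` from `t` to `ℤ`. -/
lemma two_mul_abs_sub_round_le_abs_sin (t : ℝ) : 2 * |t - round t| ≤ |sin (π * t)| := by
  have hsin : |sin (π * t)| = |sin (π * (t - round t))| := by
    rw [show π * (t - round t) = π * t - round t * π by ring, sin_sub_int_mul_pi, abs_mul,
      abs_neg_one_zpow, one_mul]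
  have hround : |π * (t - round t)| ≤ π / 2 := by
    rw [abs_mul, abs_of_pos pi_pos]
    nlinarith [abs_sub_round t, pi_pos]
  calc 2 * |t - round t| = 2 / π * |π * (t - round t)| := by
        rw [abs_mul, abs_of_pos pi_pos]; field_simp
    _ ≤ |sin (π * t)| := hsin ▸ mul_abs_le_abs_sin hround

noncomputable def dirichlet (M : ℕ) (t : ℝ) : ℂ := ∑ j ∈ range M, e (j * t)

lemma norm_dirichlet_le (M : ℕ) (t : ℝ) : ‖dirichlet M t‖ ≤ M :=
  (norm_sum_le _ _).trans (by simp [norm_e])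

lemma norm_dirichlet_le_inv {t : ℝ} (ht : 0 < |t - round t|) (M : ℕ) :
    ‖dirichlet M t‖ ≤ 1 / (2 * |t - round t|) := by
  have hgeom : (e t - 1) * dirichlet M t = e (M * t) - 1 := by
    rw [dirichlet, e_natCast_mul, ← geom_sum_mul, mul_comm]
    simp only [e_natCast_mul]
  have hnum : ‖e (M * t) - 1‖ ≤ 2 := (norm_sub_le _ _).trans (by simp [norm_e]; norm_num)
  have hden : 4 * |t - round t| ≤ ‖e t - 1‖ := by
    rw [norm_e_sub_one]; linarith [two_mul_abs_sub_round_le_abs_sin t]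
  rw [le_div_iff₀ (by positivity)]
  nlinarith [norm_nonneg (dirichlet M t), norm_mul (e t - 1) (dirichlet M t), hgeom ▸ hnum]

lemma dirichlet_neg (M : ℕ) (t : ℝ) : dirichlet M (-t) = starRingEnd ℂ (dirichlet M t) := by
  simp only [dirichlet, map_sum, conj_e, mul_neg]

noncomputable def fejerKernel (M : ℕ) (t : ℝ) : ℝ := ‖dirichlet M t‖ ^ 2 / M

lemma fejerKernel_nonneg (M : ℕ) (t : ℝ) : 0 ≤ fejerKernel M t := by
  unfold fejerKernel; positivity

lemma fejerKernel_neg (M : ℕ) (t : ℝ) : fejerKernel M (-t) = fejerKernel M t := by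
  rw [fejerKernel, fejerKernel, dirichlet_neg, RCLike.norm_conj]

lemma fejerKernel_le_self (M : ℕ) (t : ℝ) : fejerKernel M t ≤ M := by
  rcases M.eq_zero_or_pos with rfl | hM
  · simp [fejerKernel]
  rw [fejerKernel, div_le_iff₀ (by positivity)]
  nlinarith [norm_dirichlet_le M t, norm_nonneg (dirichlet M t)]

lemma fejerKernel_le_inv {t : ℝ} (ht : 0 < |t - round t|) (M : ℕ) :
    fejerKernel M t ≤ 1 / (4 * M * |t - round t| ^ 2) := by
  calc fejerKernel M t ≤ (1 / (2 * |t - round t|)) ^ 2 / M := by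
        unfold fejerKernel
        gcongr
        exact norm_dirichlet_le_inv ht M
    _ = 1 / (4 * M * |t - round t| ^ 2) := by ring

/-- `(M - |k|)⁺ / M`, counted as the number of ways to write `k = p - q` with `p, q < M`, so
that `fejerKernel_eq_sum` is a regrouping of `|dirichlet M t|²`. -/
noncomputable def fejerWeight (M : ℕ) (k : ℤ) : ℝ :=
  #{p ∈ range M ×ˢ range M | (p.1 : ℤ) - p.2 = k} / M

lemma fejerWeight_nonneg (M : ℕ) (k : ℤ) : 0 ≤ fejerWeight M k := by
  unfold fejerWeight; positivity

lemma fejerKernel_eq_sum (M : ℕ) (t : ℝ) :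
    (fejerKernel M t : ℂ) = ∑ k ∈ Icc (1 - M : ℤ) (M - 1), fejerWeight M k * e (k * t) := by
  have hsq : ((‖dirichlet M t‖ ^ 2 : ℝ) : ℂ)
      = ∑ p ∈ range M ×ˢ range M, e (((p.1 : ℤ) - p.2 : ℤ) * t) := by
    rw [Complex.ofReal_pow, ← Complex.mul_conj', dirichlet, map_sum, sum_mul_sum, ← sum_product']
    refine sum_congr rfl fun p _ => ?_
    rw [conj_e, ← e_add]; push_cast; ring_nf
  have hmaps : ∀ p ∈ range M ×ˢ range M, (p.1 : ℤ) - p.2 ∈ Icc (1 - M : ℤ) (M - 1) := by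
    intro p hp
    simp only [mem_product, mem_range] at hp
    simp only [mem_Icc]; omega
  rw [fejerKernel, Complex.ofReal_div, hsq, ← sum_fiberwise_of_maps_to hmaps, sum_div]
  refine sum_congr rfl fun k _ => ?_
  rw [sum_congr rfl fun p hp => by rw [(mem_filter.mp hp).2], sum_const, nsmul_eq_mul,
    fejerWeight]
  push_cast; ring

lemma half_le_fejerWeight {L : ℕ} (hL : 1 ≤ L) {k : ℤ} (hk : |k| ≤ L) :
    1 / 2 ≤ fejerWeight (2 * L) k := by
  have hinj : #(range L) ≤ #{p ∈ range (2 * L) ×ˢ range (2 * L) | (p.1 : ℤ) - p.2 = k} := by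
    refine card_le_card_of_injOn (fun j => (j + k.toNat, j + (-k).toNat)) ?_ ?_
    · intro j hj
      simp only [coe_range, Set.mem_Iio] at hj
      simp only [coe_filter, mem_product, mem_range, Set.mem_ofPred_eq]
      have := abs_le.mp hk
      omega
    · intro a _ b _ hab
      simp only [Prod.mk.injEq] at hab
      omega
  rw [card_range] at hinj
  rw [fejerWeight, le_div_iff₀ (by positivity)]
  have : (L : ℝ) ≤ #{p ∈ range (2 * L) ×ˢ range (2 * L) | (p.1 : ℤ) - p.2 = k} := by
    exact_mod_cast hinj
  push_cast; linarith

/-- The bound for `fejerKernel M t` when `|t - round t| ≥ κ / M`: the trivial bound `M` for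
`κ = 0`, the decay bound `1 / (4 M (κ / M)²)` otherwise. -/
noncomputable def tailBound (M κ : ℕ) : ℝ := if κ = 0 then M else M / (4 * κ ^ 2)

lemma tailBound_nonneg (M κ : ℕ) : 0 ≤ tailBound M κ := by
  unfold tailBound; split <;> positivity

lemma fejerKernel_le_tailBound {M κ : ℕ} (hM : 0 < M) {t : ℝ} (ht : κ / M ≤ |t - round t|) :
    fejerKernel M t ≤ tailBound M κ := by
  rcases eq_or_ne κ 0 with rfl | hκ
  · simpa [tailBound] using fejerKernel_le_self M t
  have hpos : (0 : ℝ) < κ / M := by positivity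
  rw [tailBound, if_neg hκ]
  calc fejerKernel M t ≤ 1 / (4 * M * |t - round t| ^ 2) := fejerKernel_le_inv (hpos.trans_le ht) M
    _ ≤ 1 / (4 * M * (κ / M) ^ 2) := by gcongr
    _ = M / (4 * κ ^ 2) := by field_simp

/-- If `fract t ∈ [κ / M, (κ + 1) / M)`, the distance from `t` to `ℤ` is at least `κ / M` or at
least `(M - 1 - κ) / M`. -/
lemma fejerKernel_le_tailBound_add {M : ℕ} (hM : 0 < M) (t : ℝ) :
    fejerKernel M t ≤
      tailBound M ⌊M * Int.fract t⌋₊ + tailBound M (M - 1 - ⌊M * Int.fract t⌋₊) := by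
  set κ := ⌊M * Int.fract t⌋₊
  have hM' : (0 : ℝ) < M := by exact_mod_cast hM
  have hfract := Int.fract_nonneg t
  have hlow : (κ : ℝ) ≤ M * Int.fract t := Nat.floor_le (by positivity)
  have hup : M * Int.fract t < κ + 1 := Nat.lt_floor_add_one _
  have hκM : κ < M := by
    have : (κ : ℝ) < M := by nlinarith [Int.fract_lt_one t]
    exact_mod_cast this
  rcases min_choice (Int.fract t) (1 - Int.fract t) with h | h
  · have : κ / M ≤ |t - round t| := by
      rw [abs_sub_round_eq_min, h, div_le_iff₀ hM']; linarith
    linarith [fejerKernel_le_tailBound hM this, tailBound_nonneg M (M - 1 - κ)]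
  · have : ((M - 1 - κ : ℕ) : ℝ) / M ≤ |t - round t| := by
      rw [abs_sub_round_eq_min, h, div_le_iff₀ hM', Nat.cast_sub (by omega), Nat.cast_sub hM]
      push_cast; linarith
    linarith [fejerKernel_le_tailBound hM this, tailBound_nonneg M κ]

lemma sum_tailBound_le (M : ℕ) : ∑ κ ∈ range M, tailBound M κ ≤ 3 / 2 * M := by
  rcases M.eq_zero_or_pos with rfl | hM
  · simp
  have htail : ∑ κ ∈ Ioo 0 M, tailBound M κ ≤ M / 2 := by
    calc ∑ κ ∈ Ioo 0 M, tailBound M κ = M / 4 * ∑ κ ∈ Ioo 0 M, ((κ : ℝ) ^ 2)⁻¹ := by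
          rw [mul_sum]
          refine sum_congr rfl fun κ hκ => ?_
          rw [tailBound, if_neg (mem_Ioo.mp hκ).1.ne']
          field_simp
      _ ≤ M / 4 * 2 := by
          gcongr
          simpa using sum_Ioo_inv_sq_le (α := ℝ) 0 M
      _ = M / 2 := by ring
  rw [range_eq_Ico, sum_eq_sum_Ico_succ_bot hM, Ico_add_one_left_eq_Ioo]
  have h0 : tailBound M 0 = M := if_pos rfl
  linarith

lemma sum_tailBound_add_le (M : ℕ) :
    ∑ κ ∈ range M, (tailBound M κ + tailBound M (M - 1 - κ)) ≤ 3 * M := by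
  rw [sum_add_distrib, sum_range_reflect (tailBound M) M]
  linarith [sum_tailBound_le M]

lemma sum_comp_le_nsmul_sum_of_card_fiber_le {α β M : Type*} [DecidableEq β] [AddCommMonoid M]
    [PartialOrder M] [IsOrderedAddMonoid M] {s : Finset α} {t : Finset β} {g : α → β}
    (hg : ∀ a ∈ s, g a ∈ t) {F : ℕ} (hF : ∀ b ∈ t, #{a ∈ s | g a = b} ≤ F) {f : β → M}
    (hf : ∀ b ∈ t, 0 ≤ f b) : ∑ a ∈ s, f (g a) ≤ F • ∑ b ∈ t, f b := by
  rw [← sum_fiberwise_of_maps_to hg, smul_sum]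
  refine sum_le_sum fun b hb => ?_
  rw [sum_congr rfl fun a ha => by rw [(mem_filter.mp ha).2], sum_const]
  exact nsmul_le_nsmul_left (hf b hb) (hF b hb)

lemma sqrt_sum_sq_le_of_abs_le {d : Type*} [Fintype d] {f : d → ℝ} {ε : ℝ} (hε : 0 ≤ ε)
    (hf : ∀ v, |f v| ≤ ε) : √(∑ v, f v ^ 2) ≤ √(Fintype.card d) * ε := by
  rw [← sqrt_sq hε, ← sqrt_mul (Nat.cast_nonneg _)]
  refine sqrt_le_sqrt ?_
  calc ∑ v, f v ^ 2 ≤ ∑ _v : d, ε ^ 2 :=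
        sum_le_sum fun v _ => sq_le_sq.mpr ((hf v).trans (le_abs_self ε))
    _ = Fintype.card d * ε ^ 2 := by rw [sum_const, card_univ, nsmul_eq_mul]

section Cells

variable {d : Type*}

noncomputable def cellIndex (M : ℕ) (w : d → ℝ) : d → ℕ := fun v => ⌊M * Int.fract (w v)⌋₊

variable [Fintype d]

lemma cellIndex_mem [DecidableEq d] {M : ℕ} (hM : 0 < M) (w : d → ℝ) :
    cellIndex M w ∈ Fintype.piFinset fun _ => range M := by
  refine Fintype.mem_piFinset.mpr fun v => mem_range.mpr ?_
  have hM' : (0 : ℝ) < M := by exact_mod_cast hM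
  refine (Nat.floor_lt (by positivity [Int.fract_nonneg (w v)])).mpr ?_
  nlinarith [Int.fract_lt_one (w v)]

lemma abs_fract_sub_fract_le_of_floor_eq {M : ℕ} (hM : 0 < M) {s s' : ℝ}
    (h : ⌊M * Int.fract s⌋₊ = ⌊M * Int.fract s'⌋₊) : |Int.fract s - Int.fract s'| ≤ 1 / M := by
  have hM' : (0 : ℝ) < M := by exact_mod_cast hM
  have h1 : (⌊M * Int.fract s⌋₊ : ℝ) ≤ M * Int.fract s :=
    Nat.floor_le (by positivity [Int.fract_nonneg s])
  have h2 : (⌊M * Int.fract s'⌋₊ : ℝ) ≤ M * Int.fract s' :=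
    Nat.floor_le (by positivity [Int.fract_nonneg s'])
  have h3 := Nat.lt_floor_add_one (M * Int.fract s)
  have h4 := Nat.lt_floor_add_one (M * Int.fract s')
  rw [h] at h1 h3
  have hM_abs : |M * Int.fract s - M * Int.fract s'| ≤ 1 := abs_le.mpr ⟨by linarith, by linarith⟩
  rw [← mul_sub, abs_mul, abs_of_pos hM'] at hM_abs
  rw [le_div_iff₀ hM']
  linarith

lemma exists_sqrt_sum_sq_le_of_cellIndex_eq {M : ℕ} (hM : 0 < M) {c y y' : d → ℝ}
    (h : cellIndex M (c - y) = cellIndex M (c - y')) :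
    ∃ z : d → ℤ, √(∑ v, (y v - y' v - z v) ^ 2) ≤ √(Fintype.card d) / M := by
  refine ⟨fun v => ⌊c v - y' v⌋ - ⌊c v - y v⌋, ?_⟩
  rw [div_eq_mul_one_div]
  refine sqrt_sum_sq_le_of_abs_le (by positivity) fun v => ?_
  have hv := abs_fract_sub_fract_le_of_floor_eq hM (congrFun h v).symm
  simp only [Int.fract, Pi.sub_apply] at hv
  convert hv using 2
  push_cast; ring

variable [DecidableEq d] {ι : Type*} [Fintype ι]

/-- Sort the `y j` by the cell of `c - y j`: each cell holds at most `F` points, and the bound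
of `fejerKernel_le_tailBound_add` summed over all cells factorises over the coordinates. -/
lemma sum_prod_fejerKernel_le {M : ℕ} (hM : 0 < M) {r : ℝ} (hr : √(Fintype.card d) / M ≤ r)
    {F : ℕ} (y : ι → d → ℝ)
    (hF : ∀ j₀, {j | ∃ z : d → ℤ, √(∑ v, (y j v - y j₀ v - z v) ^ 2) ≤ r}.ncard ≤ F)
    (c : d → ℝ) : ∑ j, ∏ v, fejerKernel M (c v - y j v) ≤ F * (3 * M) ^ Fintype.card d := by
  set h : ℕ → ℝ := fun κ => tailBound M κ + tailBound M (M - 1 - κ)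
  have hh : ∀ κ, 0 ≤ h κ := fun κ => add_nonneg (tailBound_nonneg _ _) (tailBound_nonneg _ _)
  have hfiber : ∀ κ, #{j | cellIndex M (c - y j) = κ} ≤ F := by
    intro κ
    rcases (filter (fun j => cellIndex M (c - y j) = κ) univ).eq_empty_or_nonempty
      with hempty | ⟨j₀, hj₀⟩
    · rw [hempty, card_empty]; exact Nat.zero_le F
    rw [← Set.ncard_coe_finset]
    refine (Set.ncard_le_ncard (fun j hj => ?_) (Set.toFinite _)).trans (hF j₀)
    obtain ⟨z, hz⟩ := exists_sqrt_sum_sq_le_of_cellIndex_eq hM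
      ((mem_filter.mp hj).2.trans (mem_filter.mp hj₀).2.symm)
    exact ⟨z, hz.trans hr⟩
  have hcell : ∀ j v, fejerKernel M (c v - y j v) ≤ h (cellIndex M (c - y j) v) :=
    fun j v => fejerKernel_le_tailBound_add hM (c v - y j v)
  calc ∑ j, ∏ v, fejerKernel M (c v - y j v) ≤ ∑ j, ∏ v, h (cellIndex M (c - y j) v) :=
        sum_le_sum fun j _ => prod_le_prod (fun v _ => fejerKernel_nonneg _ _) fun v _ => hcell j v
    _ ≤ F • ∑ κ ∈ Fintype.piFinset (fun _ => range M), ∏ v, h (κ v) :=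
        sum_comp_le_nsmul_sum_of_card_fiber_le (g := fun j => cellIndex M (c - y j))
          (f := fun κ => ∏ v, h (κ v)) (fun j _ => cellIndex_mem hM _) (fun κ _ => hfiber κ)
          fun κ _ => prod_nonneg fun v _ => hh _
    _ = F * ∏ _v : d, ∑ κ ∈ range M, h κ := by rw [nsmul_eq_mul, prod_univ_sum]
    _ ≤ F * ∏ _v : d, (3 * M : ℝ) := by
        gcongr with v
        · exact fun v _ => sum_nonneg fun κ _ => hh κ
        · exact sum_tailBound_add_le M
    _ = F * (3 * M) ^ Fintype.card d := by rw [prod_const, card_univ]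

end Cells

/-- Schur's test for a symmetric nonnegative kernel. -/
lemma sum_sum_mul_mul_le_of_sum_le {ι : Type*} [Fintype ι] {K : ι → ι → ℝ}
    (hK : ∀ i j, 0 ≤ K i j) (hsymm : ∀ i j, K i j = K j i) {A : ℝ} (hA : ∀ i, ∑ j, K i j ≤ A)
    (u : ι → ℝ) : ∑ i, ∑ j, u i * u j * K i j ≤ A * ∑ i, u i ^ 2 := by
  have hrow : ∑ i, ∑ j, u i ^ 2 * K i j ≤ A * ∑ i, u i ^ 2 := by
    rw [mul_sum]
    refine sum_le_sum fun i _ => ?_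
    rw [← mul_sum, mul_comm]
    exact mul_le_mul_of_nonneg_right (hA i) (sq_nonneg _)
  have hcol : ∑ i, ∑ j, u j ^ 2 * K i j = ∑ i, ∑ j, u i ^ 2 * K i j := by
    rw [sum_comm]
    exact sum_congr rfl fun i _ => sum_congr rfl fun j _ => by rw [hsymm]
  calc ∑ i, ∑ j, u i * u j * K i j ≤ ∑ i, ∑ j, (u i ^ 2 * K i j + u j ^ 2 * K i j) / 2 :=
        sum_le_sum fun i _ => sum_le_sum fun j _ => by
          nlinarith [hK i j, mul_nonneg (hK i j) (sq_nonneg (u i - u j))]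
    _ = (∑ i, ∑ j, u i ^ 2 * K i j + ∑ i, ∑ j, u j ^ 2 * K i j) / 2 := by
        simp only [add_div, sum_add_distrib, ← sum_div]
    _ ≤ A * ∑ i, u i ^ 2 := by linarith

/-- The duality principle: a bound for the operator `a ↦ (∑ n, a n * φ n i)ᵢ` follows from the
same bound for its adjoint. -/
theorem sum_norm_sum_sq_le_of_dual {α ι : Type*} [Fintype ι] (s : Finset α) (φ : α → ι → ℂ)
    {Δ : ℝ} (hΔ : 0 ≤ Δ)
    (hdual : ∀ b : ι → ℂ, ∑ n ∈ s, ‖∑ i, b i * φ n i‖ ^ 2 ≤ Δ * ∑ i, ‖b i‖ ^ 2) (a : α → ℂ) :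
    ∑ i, ‖∑ n ∈ s, a n * φ n i‖ ^ 2 ≤ Δ * ∑ n ∈ s, ‖a n‖ ^ 2 := by
  set S : ι → ℂ := fun i => ∑ n ∈ s, a n * φ n i
  set G : α → ℂ := fun n => ∑ i, starRingEnd ℂ (S i) * φ n i
  set L := ∑ i, ‖S i‖ ^ 2
  have hL0 : 0 ≤ L := sum_nonneg fun i _ => sq_nonneg _
  have hL : (L : ℂ) = ∑ n ∈ s, a n * G n := by
    simp only [L, G, S, Complex.ofReal_sum, Complex.ofReal_pow, ← Complex.mul_conj', sum_mul,
      mul_sum]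
    rw [sum_comm]
    exact sum_congr rfl fun n _ => sum_congr rfl fun i _ => by ring
  have hL_le : L ≤ ∑ n ∈ s, ‖a n‖ * ‖G n‖ := by
    calc L = ‖(L : ℂ)‖ := by rw [Complex.norm_real, Real.norm_of_nonneg hL0]
      _ ≤ ∑ n ∈ s, ‖a n‖ * ‖G n‖ := by
        rw [hL]; exact (norm_sum_le _ _).trans_eq (by simp only [norm_mul])
  have hsq : L * L ≤ (Δ * ∑ n ∈ s, ‖a n‖ ^ 2) * L := by
    calc L * L ≤ (∑ n ∈ s, ‖a n‖ * ‖G n‖) ^ 2 := by rw [← sq]; gcongr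
      _ ≤ (∑ n ∈ s, ‖a n‖ ^ 2) * ∑ n ∈ s, ‖G n‖ ^ 2 := sum_mul_sq_le_sq_mul_sq _ _ _
      _ ≤ (∑ n ∈ s, ‖a n‖ ^ 2) * (Δ * ∑ i, ‖starRingEnd ℂ (S i)‖ ^ 2) := by gcongr; exact hdual _
      _ = (Δ * ∑ n ∈ s, ‖a n‖ ^ 2) * L := by simp only [RCLike.norm_conj, L]; ring
  rcases hL0.eq_or_lt with h0 | hpos
  · rw [← h0]; exact mul_nonneg hΔ (sum_nonneg fun n _ => sq_nonneg _)
  · exact le_of_mul_le_mul_right hsq hpos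

section Dual

variable {d ι : Type*} [Fintype d] [Fintype ι]

lemma sum_mul_norm_sum_e_sq (S : Finset (d → ℤ)) (W : (d → ℤ) → ℝ) (y : ι → d → ℝ)
    (b : ι → ℂ) :
    ((∑ n ∈ S, W n * ‖∑ i, b i * e (∑ v, n v * y i v)‖ ^ 2 : ℝ) : ℂ) =
      ∑ i, ∑ j, b i * starRingEnd ℂ (b j) * ∑ n ∈ S, W n * e (∑ v, n v * (y i v - y j v)) := by
  have hterm : ∀ n : d → ℤ, ((‖∑ i, b i * e (∑ v, n v * y i v)‖ ^ 2 : ℝ) : ℂ) =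
      ∑ i, ∑ j, b i * starRingEnd ℂ (b j) * e (∑ v, n v * (y i v - y j v)) := by
    intro n
    rw [Complex.ofReal_pow, ← Complex.mul_conj', map_sum, sum_mul_sum]
    refine sum_congr rfl fun i _ => sum_congr rfl fun j _ => ?_
    rw [map_mul, conj_e, mul_mul_mul_comm, ← e_add, ← sum_neg_distrib, ← sum_add_distrib]
    exact congrArg _ (congrArg e (sum_congr rfl fun v _ => by ring))
  simp only [Complex.ofReal_sum, Complex.ofReal_mul, hterm, mul_sum]
  rw [sum_comm]
  refine sum_congr rfl fun i _ => ?_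
  rw [sum_comm]
  exact sum_congr rfl fun j _ => sum_congr rfl fun n _ => by ring

lemma one_le_two_pow_mul_prod_fejerWeight {L : ℕ} (hL : 1 ≤ L) {n : d → ℤ}
    (hn : ∀ v, |n v| ≤ L) : 1 ≤ 2 ^ Fintype.card d * ∏ v, fejerWeight (2 * L) (n v) := by
  rw [← card_univ, ← prod_const, ← prod_mul_distrib]
  calc (1 : ℝ) = ∏ _v : d, 1 := prod_const_one.symm
    _ ≤ ∏ v, 2 * fejerWeight (2 * L) (n v) := prod_le_prod (fun _ _ => zero_le_one)
        fun v _ => by linarith [half_le_fejerWeight hL (hn v)]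

variable [DecidableEq d]

lemma sum_prod_fejerWeight_mul_e (M : ℕ) (y : d → ℝ) :
    ∑ n ∈ Fintype.piFinset (fun _ : d => Icc (1 - M : ℤ) (M - 1)),
        (∏ v, (fejerWeight M (n v) : ℂ)) * e (∑ v, n v * y v) =
      ∏ v, (fejerKernel M (y v) : ℂ) := by
  simp only [fejerKernel_eq_sum, prod_univ_sum, e_sum, prod_mul_distrib]

/-- The dual large sieve inequality, with the Fejér kernel as majorant of the frequency box. -/
theorem sum_norm_sum_e_sq_le {L : ℕ} (hL : 1 ≤ L) (S : Finset (d → ℤ))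
    (hS : ∀ n ∈ S, ∀ v, |n v| ≤ L) (y : ι → d → ℝ) {A : ℝ}
    (hA : ∀ i, ∑ j, ∏ v, fejerKernel (2 * L) (y i v - y j v) ≤ A) (b : ι → ℂ) :
    ∑ n ∈ S, ‖∑ i, b i * e (∑ v, n v * y i v)‖ ^ 2 ≤
      2 ^ Fintype.card d * A * ∑ i, ‖b i‖ ^ 2 := by
  set G : (d → ℤ) → ℝ := fun n => ‖∑ i, b i * e (∑ v, n v * y i v)‖ ^ 2
  set W : (d → ℤ) → ℝ := fun n => ∏ v, fejerWeight (2 * L) (n v)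
  set box := Fintype.piFinset fun _ : d => Icc (1 - (2 * L : ℕ) : ℤ) ((2 * L : ℕ) - 1)
  set K : ι → ι → ℝ := fun i j => ∏ v, fejerKernel (2 * L) (y i v - y j v)
  have hW : ∀ n, 0 ≤ W n := fun n => prod_nonneg fun v _ => fejerWeight_nonneg _ _
  have hmajorant : ∑ n ∈ S, G n ≤ 2 ^ Fintype.card d * ∑ n ∈ box, W n * G n := by
    have hSbox : S ⊆ box := fun n hn => Fintype.mem_piFinset.mpr fun v => by
      have := abs_le.mp (hS n hn v)
      simp only [mem_Icc]; push_cast; omega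
    rw [mul_sum]
    refine (sum_le_sum fun n hn => ?_).trans
      (sum_le_sum_of_subset_of_nonneg hSbox fun n _ _ => by positivity [hW n])
    nlinarith [one_le_two_pow_mul_prod_fejerWeight hL (hS n hn), show 0 ≤ G n by positivity]
  have hexpand :
      ((∑ n ∈ box, W n * G n : ℝ) : ℂ) = ∑ i, ∑ j, b i * starRingEnd ℂ (b j) * K i j := by
    simp only [G, W, box, K, sum_mul_norm_sum_e_sq, sum_prod_fejerWeight_mul_e, Complex.ofReal_prod]
  have hK : ∀ i j, 0 ≤ K i j := fun i j => prod_nonneg fun v _ => fejerKernel_nonneg _ _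
  have hsymm : ∀ i j, K i j = K j i := fun i j => prod_congr rfl fun v _ => by
    rw [← fejerKernel_neg, neg_sub]
  have hschur : ∑ n ∈ box, W n * G n ≤ A * ∑ i, ‖b i‖ ^ 2 := by
    calc ∑ n ∈ box, W n * G n = ‖((∑ n ∈ box, W n * G n : ℝ) : ℂ)‖ := by
          rw [Complex.norm_real, Real.norm_of_nonneg (sum_nonneg fun n _ => by positivity [hW n])]
      _ ≤ ∑ i, ∑ j, ‖b i‖ * ‖b j‖ * K i j := by
          rw [hexpand]
          refine (norm_sum_le _ _).trans (sum_le_sum fun i _ => (norm_sum_le _ _).trans_eq ?_)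
          refine sum_congr rfl fun j _ => ?_
          rw [norm_mul, norm_mul, RCLike.norm_conj, Complex.norm_real, Real.norm_of_nonneg (hK i j)]
      _ ≤ A * ∑ i, ‖b i‖ ^ 2 := sum_sum_mul_mul_le_of_sum_le hK hsymm hA _
  calc ∑ n ∈ S, G n ≤ 2 ^ Fintype.card d * (A * ∑ i, ‖b i‖ ^ 2) :=
        hmajorant.trans (by gcongr)
    _ = 2 ^ Fintype.card d * A * ∑ i, ‖b i‖ ^ 2 := by ring

end Dual

lemma tsum_subtype_eq_sum_toFinset {α β : Type*} [AddCommMonoid β] [TopologicalSpace β]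
    {P : α → Prop} (hP : {a | P a}.Finite) (g : α → β) :
    ∑' a : {a // P a}, g a = ∑ a ∈ hP.toFinset, g a :=
  ((Equiv.subtypeEquivRight fun _ => hP.mem_toFinset.symm).tsum_eq fun a => g a.1).trans
    (Finset.tsum_subtype _ g)

section Ball

variable {d : Type*} [Fintype d]

lemma abs_le_ceil_of_sqrt_sum_sq_le {n : d → ℤ} {T : ℝ} (hn : √(∑ v, (n v : ℝ) ^ 2) ≤ T)
    (v : d) : |n v| ≤ ⌈T⌉₊ := by
  have h : |(n v : ℝ)| ≤ ⌈T⌉₊ :=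
    calc |(n v : ℝ)| ≤ √(∑ w, (n w : ℝ) ^ 2) :=
          abs_le_sqrt (single_le_sum (f := fun w => (n w : ℝ) ^ 2)
            (fun w _ => sq_nonneg _) (mem_univ v))
      _ ≤ ⌈T⌉₊ := hn.trans (Nat.le_ceil T)
  exact_mod_cast h

lemma finite_setOf_sqrt_sum_sq_le [DecidableEq d] (T : ℝ) :
    {n : d → ℤ | √(∑ v, (n v : ℝ) ^ 2) ≤ T}.Finite :=
  (Set.finite_Icc (-fun _ => (⌈T⌉₊ : ℤ)) fun _ => ⌈T⌉₊).subset fun _ hn =>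
    ⟨fun v => neg_le_of_abs_le (abs_le_ceil_of_sqrt_sum_sq_le hn v),
      fun v => le_of_abs_le (abs_le_ceil_of_sqrt_sum_sq_le hn v)⟩

end Ball

lemma ceil_rpow_one_div_pow_le {N : ℝ} (hN : 1 ≤ N) (m : ℕ) :
    (⌈N ^ ((1 : ℝ) / m)⌉₊ : ℝ) ^ m ≤ 2 ^ m * N := by
  set T := N ^ ((1 : ℝ) / m)
  have hT : 1 ≤ T := one_le_rpow hN (by positivity)
  have hTm : T ^ m ≤ N := by
    rw [← rpow_natCast, ← rpow_mul (by positivity)]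
    refine (rpow_le_rpow_of_exponent_le hN ?_).trans_eq (rpow_one N)
    rcases eq_or_ne m 0 with rfl | hm
    · simp
    · rw [one_div_mul_cancel (by exact_mod_cast hm)]
  calc (⌈T⌉₊ : ℝ) ^ m ≤ (2 * T) ^ m := by
        gcongr; linarith [Nat.ceil_lt_add_one (by linarith : 0 ≤ T)]
    _ ≤ 2 ^ m * N := by rw [mul_pow]; gcongr

end LargeSieve

open LargeSieve Finset

theorem large_sieve_Rm_general (m : ℕ) :
    ∃ C : ℝ, 0 < C ∧ ∀ (R N : ℕ), 2 ≤ N → ∀ (x : Fin R → Fin m → ℝ)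
      (a : (Fin m → ℤ) → ℂ) (F : ℕ),
      (∀ i : Fin R,
        (Set.ncard {j : Fin R | ∃ z : Fin m → ℤ,
          Real.sqrt (∑ v, (x j v - x i v - (z v : ℝ)) ^ 2) ≤
            Real.sqrt m / (N : ℝ) ^ ((1 : ℝ) / m)}) ≤ F) →
      (∑ i : Fin R,
        ‖∑' n : {n : Fin m → ℤ //
              Real.sqrt (∑ v, ((n v : ℝ)) ^ 2) ≤ (N : ℝ) ^ ((1 : ℝ) / m)},
            a n.1 * Complex.exp (2 * (Real.pi : ℂ) * Complex.I *
              ((∑ v, (n.1 v : ℝ) * x i v : ℝ) : ℂ))‖ ^ 2)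
      ≤ C * F * N *
        ∑' n : {n : Fin m → ℤ //
            Real.sqrt (∑ v, ((n v : ℝ)) ^ 2) ≤ (N : ℝ) ^ ((1 : ℝ) / m)}, ‖a n.1‖ ^ 2 := by
  refine ⟨24 ^ m, by positivity, fun R N hN x a F hF => ?_⟩
  set T : ℝ := (N : ℝ) ^ ((1 : ℝ) / m)
  set L := ⌈T⌉₊
  have hN1 : (1 : ℝ) ≤ N := by exact_mod_cast (by omega : 1 ≤ N)
  have hT : 1 ≤ T := Real.one_le_rpow hN1 (by positivity)
  have hL : 1 ≤ L := Nat.one_le_ceil_iff.mpr (by linarith)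
  have hfin := finite_setOf_sqrt_sum_sq_le (d := Fin m) T
  have hrow : ∀ i, ∑ j, ∏ v, fejerKernel (2 * L) (x i v - x j v) ≤ F * (3 * (2 * L)) ^ m := by
    intro i
    simpa using sum_prod_fejerKernel_le (M := 2 * L) (by omega) (r := √m / T) (by
      rw [Fintype.card_fin]; gcongr; push_cast; linarith [Nat.le_ceil T]) x hF (x i)
  rw [tsum_subtype_eq_sum_toFinset hfin fun n => ‖a n‖ ^ 2]
  calc _ = ∑ i, ‖∑ n ∈ hfin.toFinset, a n * e (∑ v, n v * x i v)‖ ^ 2 :=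
        sum_congr rfl fun i _ => congrArg (‖·‖ ^ 2)
          (tsum_subtype_eq_sum_toFinset hfin fun n => a n * e (∑ v, n v * x i v))
    _ ≤ (2 ^ m * (F * (3 * (2 * L)) ^ m)) * ∑ n ∈ hfin.toFinset, ‖a n‖ ^ 2 := by
        refine sum_norm_sum_sq_le_of_dual _ _ (by positivity) (fun b => ?_) a
        simpa using sum_norm_sum_e_sq_le hL _
          (fun n hn => abs_le_ceil_of_sqrt_sum_sq_le (hfin.mem_toFinset.mp hn)) x hrow b
    _ ≤ (2 ^ m * 6 ^ m * 2 ^ m) * F * N * ∑ n ∈ hfin.toFinset, ‖a n‖ ^ 2 := by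
        gcongr ?_ * _
        calc (2 : ℝ) ^ m * (F * (3 * (2 * L)) ^ m) = 2 ^ m * 6 ^ m * F * L ^ m := by ring
          _ ≤ 2 ^ m * 6 ^ m * F * (2 ^ m * N) := by gcongr; exact ceil_rpow_one_div_pow_le hN1 m
          _ = 2 ^ m * 6 ^ m * 2 ^ m * F * N := by ring
    _ = 24 ^ m * F * N * ∑ n ∈ hfin.toFinset, ‖a n‖ ^ 2 := by
        rw [← mul_pow, ← mul_pow]; norm_num

/-- the large sieve for ℝ^m. If F bounds, for each i, the number of j with
min_{z ∈ ℤ^m} ‖x_j - x_i - z‖₂ ≤ √m/N^{1/m}, then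
Σ_{i=1}^R |Σ_{n ∈ ℤ^m, ‖n‖₂ ≤ N^{1/m}} a_n e(n·x_i)|² ≪_m F·N·Σ_n |a_n|². -/
theorem large_sieve_Rm (m : ℕ) (hm : 1 ≤ m) :
    ∃ C : ℝ, 0 < C ∧ ∀ (R N : ℕ), 2 ≤ N → ∀ (x : Fin R → Fin m → ℝ)
      (a : (Fin m → ℤ) → ℂ) (F : ℕ),
      (∀ i : Fin R,
        (Set.ncard {j : Fin R | ∃ z : Fin m → ℤ,
          Real.sqrt (∑ v, (x j v - x i v - (z v : ℝ)) ^ 2) ≤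
            Real.sqrt m / (N : ℝ) ^ ((1 : ℝ) / m)}) ≤ F) →
      (∑ i : Fin R,
        ‖∑' n : {n : Fin m → ℤ //
              Real.sqrt (∑ v, ((n v : ℝ)) ^ 2) ≤ (N : ℝ) ^ ((1 : ℝ) / m)},
            a n.1 * Complex.exp (2 * (Real.pi : ℂ) * Complex.I *
              ((∑ v, (n.1 v : ℝ) * x i v : ℝ) : ℂ))‖ ^ 2)
      ≤ C * F * N *
        ∑' n : {n : Fin m → ℤ //
            Real.sqrt (∑ v, ((n v : ℝ)) ^ 2) ≤ (N : ℝ) ^ ((1 : ℝ) / m)}, ‖a n.1‖ ^ 2 :=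
  large_sieve_Rm_general m
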